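/- arXiv:1806.10737 — 5 statements merged into one kernel-verified Lean document; each statement's English description precedes it below -/
import Mathlib

section
/- Let Ξ be a set, let (S, Σ, μ) be a measure space with μ(S) < ∞, let h₀ > 0, let h : Ξ → [h₀, ∞) be unbounded, let q ≥ 1 be an integer, let λ_{ξ,j} : S → [0,∞) be measurable for each ξ ∈ Ξ and j = 1,…,q, and let c₉ ≥ 0. Assume: (a) for every ε₁₀ > 0 and every ε₁₁ > 0 there exist a subset Ξ' ⊆ Ξ on which h is unbounded, and measurable sets T_ξ ⊆ S for ξ ∈ Ξ' with μ(T_ξ) ≤ ε₁₁, such that |λ_{η,j}(v)/h(η) − λ_{ζ,j}(v)/h(ζ)| ≤ (4 + c₉/h(η) + c₉/h(ζ))·ε₁₀ for all η, ζ ∈ Ξ', all v ∈ S \ (T_η ∪ T_ζ), and all j = 1,…,q; and (b) for every ε₈ > 0 there is ε₅ > 0 such that ∫_T λ_{ξ,j} dμ ≤ ε₈·(h(ξ) + c₉) for all j = 1,…,q, all ξ ∈ Ξ, and all measurable T ⊆ S with μ(T) ≤ ε₅. For ξ ∈ Ξ define λ_ξ : S → ℝ by λ_ξ(v) = max{λ_{ξ,1}(v),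 …, λ_{ξ,q}(v)}. Then for every integer n ≥ 1, every ε'' > 0, every c'' ∈ ℝ, and every real r_min ≥ 1, there exist ξ₁, …, ξₙ ∈ Ξ, a measurable set T ⊆ S, and a measurable function J : S \ T → {1,…,q} such that h(ξ_i)/h(ξ_{i−1}) ≥ r_min for all i = 2,…,n, and for every i = 1,…,n: ∫_S (λ_{ξ_i}/h(ξ_i)) dμ − ∫_{S\T} min_{1≤i'≤n} ( λ_{ξ_{i'},J(v)}(v)/h(ξ_{i'}) ) dμ(v) + c''/h(ξ₁) ≤ ε''. (Lemma 8.10.) -/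
/-!
Take `ξ₁, …, ξₙ` in the set `Ξ'` of (a) with `h` growing geometrically, let `T` be the union of
their exceptional sets, and let `J(v)` maximise `j ↦ λ_{ξ₁,j}(v)`. Off `T` the normalised
functions `λ_{ξ_i,j}/h(ξ_i)` are pairwise `δ`-close, so `max_j λ_{ξ_i,j}/h(ξ_i)` exceeds
`min_{i'} λ_{ξ_{i'},J(v)}(v)/h(ξ_{i'})` by at most `2δ`, which costs `2δ·μ(S)`. Since `μ(T)` is
small, (b) bounds `∫_T λ_{ξ_i}/h(ξ_i)` by `∑_j ∫_T λ_{ξ_i,j}/h(ξ_i) ≤ q·ε₈(1 + c₉/h₀)`. Finally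
`h(ξ₁)` large makes `c''/h(ξ₁)` small.
-/

open MeasureTheory Set

theorem exists_seq_mem_mul_le_succ {α : Type*} {s : Set α} {f : α → ℝ}
    (hf : ∀ C, ∃ x ∈ s, C < f x) (M r : ℝ) :
    ∃ x : ℕ → α, (∀ k, x k ∈ s) ∧ M < f (x 0) ∧ ∀ k, r * f (x k) ≤ f (x (k + 1)) := by
  choose g hgs hgf using hf
  refine ⟨fun k => Nat.rec (g M) (fun _ y => g (r * f y)) k, fun k => ?_, hgf M,
    fun k => (hgf _).le⟩
  cases k <;> exact hgs _

theorem exists_measurable_argmax {Ω : Type*} [MeasurableSpace Ω] {q : ℕ} (hq : 0 < q)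
    {f : Fin q → Ω → ℝ} (hf : ∀ j, Measurable (f j)) :
    ∃ J : Ω → Fin q, Measurable J ∧ ∀ v j, f j v ≤ f (J v) v := by
  classical
  set P : Ω → Fin q → Prop := fun v j => ∀ j', f j' v ≤ f j v
  have hP : ∀ v, ∃ j, P v j := fun v => by
    obtain ⟨j, -, hj⟩ := Finset.exists_max_image Finset.univ (f · v) ⟨⟨0, hq⟩, Finset.mem_univ _⟩
    exact ⟨j, fun j' => hj j' (Finset.mem_univ _)⟩
  have hPmeas : ∀ j, MeasurableSet {v | P v j} := fun j => by
    simp only [P, ofPred_forall]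
    exact .iInter fun j' => measurableSet_le (hf j') (hf j)
  refine ⟨fun v => Fin.find (P v) (hP v), measurable_to_countable' fun j => ?_,
    fun v => Fin.find_spec (hP v)⟩
  have hfiber : (fun v => Fin.find (P v) (hP v)) ⁻¹' {j} =
      {v | P v j} ∩ ⋂ j' < j, {v | P v j'}ᶜ := by
    ext v
    simp [Fin.find_eq_iff]
  rw [hfiber]
  exact (hPmeas j).inter (.iInter fun j' => .iInter fun _ => (hPmeas j').compl)

theorem Real.iSup_div_of_nonneg {ι : Sort*} {r : ℝ} (hr : 0 ≤ r) (f : ι → ℝ) :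
    (⨆ i, f i) / r = ⨆ i, f i / r := by
  simp only [div_eq_mul_inv, Real.iSup_mul_of_nonneg (inv_nonneg.2 hr)]

theorem iSup_le_iInf_add_two_mul {ι κ : Type*} {a : ι → κ → ℝ} {δ : ℝ}
    (hclose : ∀ i i' j, a i j ≤ a i' j + δ) {i₀ : ι} {j₀ : κ}
    (hmax : ∀ j, a i₀ j ≤ a i₀ j₀) (i : ι) :
    ⨆ j, a i j ≤ (⨅ i', a i' j₀) + 2 * δ := by
  have : Nonempty ι := ⟨i₀⟩
  have : Nonempty κ := ⟨j₀⟩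
  have hinf : a i₀ j₀ - δ ≤ ⨅ i', a i' j₀ := le_ciInf fun i' => by linarith [hclose i₀ i' j₀]
  exact ciSup_le fun j => by linarith [hclose i i₀ j, hmax j]

section Integrals

variable {Ω : Type*} [MeasurableSpace Ω] {μ : Measure Ω}

theorem setIntegral_iSup_le_sum {ι : Type*} [Fintype ι] {f : ι → Ω → ℝ} {T : Set Ω}
    (hf : ∀ j, AEStronglyMeasurable (f j) (μ.restrict T)) (hf0 : ∀ j v, 0 ≤ f j v)
    (hint : IntegrableOn (fun v => ⨆ j, f j v) T μ) :
    ∫ v in T, ⨆ j, f j v ∂μ ≤ ∑ j, ∫ v in T, f j v ∂μ := by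
  have hfi : ∀ j, IntegrableOn (f j) T μ := fun j =>
    hint.mono' (hf j) (ae_of_all _ fun v => by
      rw [Real.norm_eq_abs, abs_of_nonneg (hf0 j v)]
      exact le_ciSup (f := (f · v)) (finite_range _).bddAbove j)
  rw [← integral_finsetSum _ fun j _ => hfi j]
  refine integral_mono hint (integrable_finsetSum _ fun j _ => hfi j) fun v => ?_
  exact Real.iSup_le (fun j => Finset.single_le_sum (f := (f · v)) (fun j' _ => hf0 j' v)
    (Finset.mem_univ j)) (Finset.sum_nonneg fun j _ => hf0 j v)

theorem integral_sub_setIntegral_compl_le [IsFiniteMeasure μ] {g F : Ω → ℝ} {T : Set Ω}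
    {η δ : ℝ} (hT : MeasurableSet T) (hF : AEStronglyMeasurable F μ) (hF0 : ∀ v, 0 ≤ F v)
    (hFg : ∀ v, F v ≤ g v) (hgF : ∀ v ∈ Tᶜ, g v ≤ F v + δ)
    (hgT : IntegrableOn g T μ → ∫ v in T, g v ∂μ ≤ η) (hη : 0 ≤ η) (hδ : 0 ≤ δ) :
    ∫ v, g v ∂μ - ∫ v in Tᶜ, F v ∂μ ≤ η + μ.real univ * δ := by
  have hFint : 0 ≤ ∫ v in Tᶜ, F v ∂μ := setIntegral_nonneg hT.compl fun v _ => hF0 v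
  by_cases hg : Integrable g μ
  swap
  · rw [integral_undef hg]
    have := mul_nonneg (measureReal_nonneg (μ := μ) (s := univ)) hδ
    linarith
  have hFi : IntegrableOn F Tᶜ μ := hg.integrableOn.mono' hF.restrict (ae_of_all _ fun v => by
    rw [Real.norm_eq_abs, abs_of_nonneg (hF0 v)]
    exact hFg v)
  have hcompl : ∫ v in Tᶜ, g v ∂μ ≤ ∫ v in Tᶜ, F v ∂μ + μ.real univ * δ := calc
    ∫ v in Tᶜ, g v ∂μ ≤ ∫ v in Tᶜ, (F v + δ) ∂μ :=
      setIntegral_mono_on hg.integrableOn (hFi.add (integrable_const _)) hT.compl hgF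
    _ = ∫ v in Tᶜ, F v ∂μ + μ.real Tᶜ * δ := by
      rw [integral_add hFi (integrable_const _), setIntegral_const, smul_eq_mul]
    _ ≤ ∫ v in Tᶜ, F v ∂μ + μ.real univ * δ :=
      add_le_add_right (mul_le_mul_of_nonneg_right (measureReal_mono (μ := μ) (subset_univ _)) hδ) _
  linarith [integral_add_compl hT hg, hgT hg.integrableOn]

theorem integral_iSup_sub_setIntegral_iInf_le [IsFiniteMeasure μ] {ι κ : Type*} [Fintype ι]
    [Fintype κ] [MeasurableSpace κ] [MeasurableSingletonClass κ] {a : ι → κ → Ω → ℝ}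
    (ha : ∀ i j, Measurable (a i j)) (ha0 : ∀ i j v, 0 ≤ a i j v)
    {T : Set Ω} (hT : MeasurableSet T) {η δ : ℝ} (hη : 0 ≤ η) (hδ : 0 ≤ δ)
    (hTsmall : ∀ i j, ∫ v in T, a i j v ∂μ ≤ η)
    (hclose : ∀ v ∈ Tᶜ, ∀ i i' j, a i j v ≤ a i' j v + δ)
    {J : Ω → κ} (hJ : Measurable J) {i₀ : ι} (hJmax : ∀ v j, a i₀ j v ≤ a i₀ (J v) v) (i : ι) :
    ∫ v, ⨆ j, a i j v ∂μ - ∫ v in Tᶜ, ⨅ i', a i' (J v) v ∂μ ≤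
      Fintype.card κ * η + μ.real univ * (2 * δ) := by
  have : Nonempty ι := ⟨i⟩
  have haJ : ∀ i', Measurable fun v => a i' (J v) v := fun i' =>
    (measurable_from_prod_countable_left (f := fun p : Ω × κ => a i' p.2 p.1) (ha i')).comp
      (measurable_id.prodMk hJ)
  refine integral_sub_setIntegral_compl_le hT (Measurable.iInf haJ).aestronglyMeasurable
    (fun v => le_ciInf fun i' => ha0 i' _ v) (fun v => ?_)
    (fun v hv => iSup_le_iInf_add_two_mul (hclose v hv) (hJmax v) i) (fun hint => ?_)
    (by positivity) (by positivity)
  · exact (ciInf_le (finite_range _).bddBelow i).trans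
      (le_ciSup (f := (a i · v)) (finite_range _).bddAbove (J v))
  · calc ∫ v in T, ⨆ j, a i j v ∂μ ≤ ∑ j, ∫ v in T, a i j v ∂μ :=
          setIntegral_iSup_le_sum (fun j => (ha i j).aestronglyMeasurable) (ha0 i) hint
      _ ≤ ∑ _j : κ, η := Finset.sum_le_sum fun j _ => hTsmall i j
      _ = Fintype.card κ * η := by simp

end Integrals

theorem add_le_one_add_div_mul {c h₀ x : ℝ} (hh₀ : 0 < h₀) (hc : 0 ≤ c) (hx : h₀ ≤ x) :
    x + c ≤ (1 + c / h₀) * x := by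
  have := mul_le_mul_of_nonneg_left hx (div_nonneg hc hh₀.le)
  rw [div_mul_cancel₀ _ hh₀.ne'] at this
  linarith

theorem measure_iUnion_fin_le_ofReal {Ω : Type*} [MeasurableSpace Ω] {μ : Measure Ω} {n : ℕ}
    (hn : n ≠ 0) {s : Fin n → Set Ω} {ε : ℝ} (hs : ∀ i, μ (s i) ≤ ENNReal.ofReal (ε / n)) :
    μ (⋃ i, s i) ≤ ENNReal.ofReal ε := calc
  μ (⋃ i, s i) ≤ ∑ i, μ (s i) := measure_iUnion_fintype_le μ s
  _ ≤ ∑ _i : Fin n, ENNReal.ofReal (ε / n) := Finset.sum_le_sum fun i _ => hs i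
  _ = ENNReal.ofReal ε := by
    rw [Finset.sum_const, Finset.card_univ, Fintype.card_fin, ← ENNReal.ofReal_nsmul,
      nsmul_eq_mul, mul_div_cancel₀ _ (by exact_mod_cast hn)]

section Normalization

variable {Ω Ξ κ : Type*} [MeasurableSpace Ω] {μ : Measure Ω} {h : Ξ → ℝ} {h₀ c : ℝ}
  {lam : Ξ → κ → Ω → ℝ}

theorem forall_exists_setIntegral_div_le (hh₀ : 0 < h₀) (hge : ∀ ξ, h₀ ≤ h ξ) (hc : 0 ≤ c)
    (hb : ∀ ε > (0 : ℝ), ∃ ε₅ > (0 : ℝ), ∀ j ξ (T : Set Ω), MeasurableSet T →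
      μ T ≤ ENNReal.ofReal ε₅ → ∫ v in T, lam ξ j v ∂μ ≤ ε * (h ξ + c)) :
    ∀ ε > (0 : ℝ), ∃ ε₅ > (0 : ℝ), ∀ j ξ (T : Set Ω), MeasurableSet T →
      μ T ≤ ENNReal.ofReal ε₅ → ∫ v in T, lam ξ j v / h ξ ∂μ ≤ ε := by
  intro ε hε
  obtain ⟨ε₅, hε₅, hT⟩ := hb (ε / (1 + c / h₀)) (by positivity)
  refine ⟨ε₅, hε₅, fun j ξ T hTm hμT => ?_⟩
  rw [integral_div, div_le_iff₀ (hh₀.trans_le (hge ξ))]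
  calc ∫ v in T, lam ξ j v ∂μ ≤ ε / (1 + c / h₀) * (h ξ + c) := hT j ξ T hTm hμT
    _ ≤ ε / (1 + c / h₀) * ((1 + c / h₀) * h ξ) := by
      gcongr
      exact add_le_one_add_div_mul hh₀ hc (hge ξ)
    _ = ε * h ξ := by field_simp

theorem forall_exists_div_le_div_add (hh₀ : 0 < h₀) (hge : ∀ ξ, h₀ ≤ h ξ) (hc : 0 ≤ c)
    (ha : ∀ ε₁₀ > (0 : ℝ), ∀ ε₁₁ > (0 : ℝ), ∃ (Ξ' : Set Ξ) (T : Ξ → Set Ω),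
      (∀ C : ℝ, ∃ ξ ∈ Ξ', C < h ξ) ∧
      (∀ ξ ∈ Ξ', MeasurableSet (T ξ) ∧ μ (T ξ) ≤ ENNReal.ofReal ε₁₁) ∧
      (∀ η ∈ Ξ', ∀ ζ ∈ Ξ', ∀ v ∉ T η ∪ T ζ, ∀ j,
        |lam η j v / h η - lam ζ j v / h ζ| ≤ (4 + c / h η + c / h ζ) * ε₁₀)) :
    ∀ δ > (0 : ℝ), ∀ ε₁₁ > (0 : ℝ), ∃ (Ξ' : Set Ξ) (T : Ξ → Set Ω),
      (∀ C : ℝ, ∃ ξ ∈ Ξ', C < h ξ) ∧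
      (∀ ξ ∈ Ξ', MeasurableSet (T ξ) ∧ μ (T ξ) ≤ ENNReal.ofReal ε₁₁) ∧
      (∀ η ∈ Ξ', ∀ ζ ∈ Ξ', ∀ v ∉ T η ∪ T ζ, ∀ j,
        lam η j v / h η ≤ lam ζ j v / h ζ + δ) := by
  intro δ hδ ε₁₁ hε₁₁
  set K := 4 + 2 * (c / h₀)
  have hK : 0 < K := by positivity
  obtain ⟨Ξ', T, hunb, hT, hclose⟩ := ha (δ / K) (div_pos hδ hK) ε₁₁ hε₁₁
  refine ⟨Ξ', T, hunb, hT, fun η hη ζ hζ v hv j => ?_⟩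
  have hfac : ∀ ξ, c / h ξ ≤ c / h₀ := fun ξ => div_le_div_of_nonneg_left hc hh₀ (hge ξ)
  calc lam η j v / h η ≤ lam ζ j v / h ζ + (4 + c / h η + c / h ζ) * (δ / K) := by
        linarith [(abs_sub_le_iff.1 (hclose η hη ζ hζ v hv j)).1]
    _ ≤ lam ζ j v / h ζ + K * (δ / K) := by
        gcongr
        linarith [hfac η, hfac ζ]
    _ = lam ζ j v / h ζ + δ := by rw [mul_div_cancel₀ δ hK.ne']

end Normalization

theorem simultaneous_approximation_cost_general
    {Ω : Type*} [MeasurableSpace Ω] (μ : Measure Ω) (hμfin : μ Set.univ < ⊤)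
    {Ξ : Type*} (h₀ : ℝ) (hh₀ : 0 < h₀) (h : Ξ → ℝ)
    (hge : ∀ ξ, h₀ ≤ h ξ)
    (q : ℕ) (hq : 1 ≤ q) (lam : Ξ → Fin q → Ω → ℝ)
    (hmeas : ∀ ξ j, Measurable (lam ξ j)) (hnonneg : ∀ ξ j v, 0 ≤ lam ξ j v)
    (c₉ : ℝ) (hc₉ : 0 ≤ c₉)
    (ha : ∀ ε₁₀ > (0 : ℝ), ∀ ε₁₁ > (0 : ℝ), ∃ (Ξ' : Set Ξ) (T : Ξ → Set Ω),
      (∀ C : ℝ, ∃ ξ ∈ Ξ', C < h ξ) ∧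
      (∀ ξ ∈ Ξ', MeasurableSet (T ξ) ∧ μ (T ξ) ≤ ENNReal.ofReal ε₁₁) ∧
      (∀ η ∈ Ξ', ∀ ζ ∈ Ξ', ∀ v ∉ T η ∪ T ζ, ∀ j : Fin q,
        |lam η j v / h η - lam ζ j v / h ζ| ≤ (4 + c₉ / h η + c₉ / h ζ) * ε₁₀))
    (hb : ∀ ε₈ > (0 : ℝ), ∃ ε₅ > (0 : ℝ), ∀ (j : Fin q) (ξ : Ξ) (T : Set Ω),
      MeasurableSet T → μ T ≤ ENNReal.ofReal ε₅ →
      ∫ v in T, lam ξ j v ∂μ ≤ ε₈ * (h ξ + c₉)) :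
    ∀ (n : ℕ) (hn : 1 ≤ n), ∀ ε'' > (0 : ℝ), ∀ (c'' : ℝ), ∀ rmin ≥ (1 : ℝ),
    ∃ (ξ : Fin n → Ξ) (T : Set Ω) (J : Ω → Fin q),
      MeasurableSet T ∧ Measurable J ∧
      (∀ i : Fin n, 0 < i.val →
        rmin ≤ h (ξ i) / h (ξ ⟨i.val - 1, Nat.lt_of_le_of_lt (Nat.sub_le i.val 1) i.isLt⟩)) ∧
      ∀ i : Fin n,
        (∫ v, (⨆ j : Fin q, lam (ξ i) j v) / h (ξ i) ∂μ) -
          (∫ v in Tᶜ, ⨅ i' : Fin n, lam (ξ i') (J v) v / h (ξ i') ∂μ) +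
          c'' / h (ξ ⟨0, Nat.lt_of_lt_of_le Nat.zero_lt_one hn⟩) ≤ ε'' := by
  intro n hn ε hε c'' rmin _
  have : IsFiniteMeasure μ := ⟨hμfin⟩
  have hpos : ∀ ξ, 0 < h ξ := fun ξ => hh₀.trans_le (hge ξ)
  have hq' : (0 : ℝ) < q := by exact_mod_cast hq
  obtain ⟨ε₅, hε₅, hsmall⟩ :=
    forall_exists_setIntegral_div_le hh₀ hge hc₉ hb (ε / (3 * q)) (by positivity)
  set δ := ε / (6 * (μ.real univ + 1))
  obtain ⟨Ξ', Tf, hunb, hTf, hclose⟩ :=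
    forall_exists_div_le_div_add hh₀ hge hc₉ ha δ (by positivity) (ε₅ / n) (by positivity)
  obtain ⟨x, hxΞ', hx0, hxsucc⟩ := exists_seq_mem_mul_le_succ hunb (3 * |c''| / ε) rmin
  obtain ⟨J, hJ, hJmax⟩ :=
    exists_measurable_argmax hq fun j => (hmeas (x 0) j).div_const (h (x 0))
  set T := ⋃ i : Fin n, Tf (x i)
  have hTm : MeasurableSet T := .iUnion fun i => (hTf _ (hxΞ' i)).1
  have hμT : μ T ≤ ENNReal.ofReal ε₅ :=
    measure_iUnion_fin_le_ofReal (by omega) fun i => (hTf _ (hxΞ' i)).2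
  have hTc : ∀ v ∈ Tᶜ, ∀ i i' : Fin n, v ∉ Tf (x i) ∪ Tf (x i') := fun v hv i i' hv' =>
    hv (hv'.elim (fun h => mem_iUnion.2 ⟨i, h⟩) fun h => mem_iUnion.2 ⟨i', h⟩)
  refine ⟨fun i => x i, T, J, hTm, hJ, fun i hi => ?_, fun i => ?_⟩
  · obtain ⟨k, hk⟩ := Nat.exists_eq_add_one_of_ne_zero hi.ne'
    simpa [hk, le_div_iff₀ (hpos _)] using hxsucc k
  have hcore := integral_iSup_sub_setIntegral_iInf_le (μ := μ) (i₀ := ⟨0, hn⟩)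
    (a := fun (i : Fin n) j v => lam (x i) j v / h (x i)) (fun i j => (hmeas _ j).div_const _)
    (fun i j v => div_nonneg (hnonneg _ _ _) (hpos _).le) hTm (by positivity)
    (by positivity : 0 ≤ δ) (fun i j => hsmall j (x i) T hTm hμT)
    (fun v hv i i' j => hclose _ (hxΞ' i) _ (hxΞ' i') v (hTc v hv i i') j) hJ hJmax i
  have hc'' : c'' / h (x 0) ≤ ε / 3 := by
    rw [div_lt_iff₀ hε] at hx0
    rw [div_le_iff₀ (hpos _)]
    linarith [le_abs_self c'']
  have hδ : μ.real univ * (2 * δ) ≤ ε / 3 := calc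
    μ.real univ * (2 * δ) ≤ (μ.real univ + 1) * (2 * δ) := by gcongr; linarith
    _ = ε / 3 := by simp only [δ]; field_simp; ring
  have hq'' : (Fintype.card (Fin q) : ℝ) * (ε / (3 * q)) = ε / 3 := by
    rw [Fintype.card_fin]; field_simp
  simp only [Real.iSup_div_of_nonneg (hpos _).le]
  linarith

/-- Lemma 8.10.  With `Ξ`, a finite measure space `(S, Σ, μ)`, `h : Ξ → [h₀, ∞)`
unbounded (`h₀ > 0`), `q ≥ 1`, measurable `λ_{ξ,j} : S → [0, ∞)` and `c₉ ≥ 0`,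
assume (a) the conclusion of Lemma 8.9 holds for every `ε₁₀ > 0` and `ε₁₁ > 0`,
and (b) for every `ε₈ > 0` there is `ε₅ > 0` with `∫_T λ_{ξ,j} dμ ≤ ε₈·(h(ξ)+c₉)`
whenever `μ(T) ≤ ε₅`.  Set `λ_ξ = max_j λ_{ξ,j}`.  Then for all `n ≥ 1`,
`ε'' > 0`, `c'' ∈ ℝ` and `r_min ≥ 1` there exist `ξ₁, …, ξₙ ∈ Ξ`, a measurable
`T ⊆ S` and a measurable `J : S \ T → {1, …, q}` with `h(ξ_i)/h(ξ_{i-1}) ≥ r_min`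
for `i = 2, …, n` and, for each `i`,
`∫_S λ_{ξ_i}/h(ξ_i) dμ − ∫_{S\T} min_{i'} λ_{ξ_{i'},J(v)}(v)/h(ξ_{i'}) dμ(v)
 + c''/h(ξ₁) ≤ ε''`. -/
theorem simultaneous_approximation_cost
    {Ω : Type*} [MeasurableSpace Ω] (μ : Measure Ω) (hμfin : μ Set.univ < ⊤)
    {Ξ : Type*} (h₀ : ℝ) (hh₀ : 0 < h₀) (h : Ξ → ℝ)
    (hge : ∀ ξ, h₀ ≤ h ξ) (hunb : ∀ C : ℝ, ∃ ξ, C < h ξ)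
    (q : ℕ) (hq : 1 ≤ q) (lam : Ξ → Fin q → Ω → ℝ)
    (hmeas : ∀ ξ j, Measurable (lam ξ j)) (hnonneg : ∀ ξ j v, 0 ≤ lam ξ j v)
    (c₉ : ℝ) (hc₉ : 0 ≤ c₉)
    (ha : ∀ ε₁₀ > (0 : ℝ), ∀ ε₁₁ > (0 : ℝ), ∃ (Ξ' : Set Ξ) (T : Ξ → Set Ω),
      (∀ C : ℝ, ∃ ξ ∈ Ξ', C < h ξ) ∧
      (∀ ξ ∈ Ξ', MeasurableSet (T ξ) ∧ μ (T ξ) ≤ ENNReal.ofReal ε₁₁) ∧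
      (∀ η ∈ Ξ', ∀ ζ ∈ Ξ', ∀ v ∉ T η ∪ T ζ, ∀ j : Fin q,
        |lam η j v / h η - lam ζ j v / h ζ| ≤ (4 + c₉ / h η + c₉ / h ζ) * ε₁₀))
    (hb : ∀ ε₈ > (0 : ℝ), ∃ ε₅ > (0 : ℝ), ∀ (j : Fin q) (ξ : Ξ) (T : Set Ω),
      MeasurableSet T → μ T ≤ ENNReal.ofReal ε₅ →
      ∫ v in T, lam ξ j v ∂μ ≤ ε₈ * (h ξ + c₉)) :
    ∀ (n : ℕ) (hn : 1 ≤ n), ∀ ε'' > (0 : ℝ), ∀ (c'' : ℝ), ∀ rmin ≥ (1 : ℝ),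
    ∃ (ξ : Fin n → Ξ) (T : Set Ω) (J : Ω → Fin q),
      MeasurableSet T ∧ Measurable J ∧
      (∀ i : Fin n, 0 < i.val →
        rmin ≤ h (ξ i) / h (ξ ⟨i.val - 1, Nat.lt_of_le_of_lt (Nat.sub_le i.val 1) i.isLt⟩)) ∧
      ∀ i : Fin n,
        (∫ v, (⨆ j : Fin q, lam (ξ i) j v) / h (ξ i) ∂μ) -
          (∫ v in Tᶜ, ⨅ i' : Fin n, lam (ξ i') (J v) v / h (ξ i') ∂μ) +
          c'' / h (ξ ⟨0, Nat.lt_of_lt_of_le Nat.zero_lt_one hn⟩) ≤ ε'' :=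
  simultaneous_approximation_cost_general μ hμfin h₀ hh₀ h hge q hq lam hmeas hnonneg c₉ hc₉ ha hb
end

section
/- Let q ≥ 2 be an integer and let ε' > 0. Then there is an integer n₀ = n₀(q, ε') ≥ 2 such that for every integer n ≥ n₀ there exist real numbers τ > 0 and σ > 0 satisfying q·Vol_n(τ) < 1 < q·Vol_n(τ) + Vol_n(σ) and (2 + ε')·(τ − σ) > n. (Lemma 10.4.) -/
/-!
`Vol n` is the distribution function of the sum `S` of `n` independent uniform `[0, 1]` variables.
The level sets of `S` are hyperplanes, hence null, so `Vol n` is continuous; it increases from `0`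
to `1`. Chebyshev's inequality (`𝔼 S = n / 2`, `Var S ≤ n / 4`) makes `Vol n (n / (2 + ε') + 2)`
tend to `0`, so for large `n` the intermediate value theorem gives `τ ≥ n / (2 + ε') + 2` with
`q Vol n τ = 1 - Vol n 1 / 2`, and `σ = 1` works because `Vol n 1 > 0`.
-/

/-- `Vol n τ` is the Lebesgue measure of
`{(x₁, …, xₙ) ∈ [0,1]ⁿ : x₁ + ⋯ + xₙ < τ}`. -/
noncomputable def Vol (n : ℕ) (τ : ℝ) : ℝ :=
  (MeasureTheory.volume
    {x : Fin n → ℝ | (∀ i, x i ∈ Set.Icc (0 : ℝ) 1) ∧ ∑ i, x i < τ}).toReal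

open MeasureTheory ProbabilityTheory Set Filter Topology

lemma continuous_measureReal_setOf_lt {α : Type*} [MeasurableSpace α] {μ : Measure α}
    [IsFiniteMeasure μ] {g : α → ℝ} (hg : Measurable g) (h : ∀ t, μ {x | g x = t} = 0) :
    Continuous fun t => μ.real {x | g x < t} := by
  have hint : ∀ t, μ.real {x | g x < t} = ∫ x, {x | g x < t}.indicator 1 x ∂μ := fun t =>
    (integral_indicator_one (measurableSet_lt hg measurable_const)).symm
  simp_rw [hint]
  refine continuous_iff_continuousAt.2 fun t₀ => continuousAt_of_dominated
    (bound := fun _ => 1) ?_ ?_ (integrable_const 1) ?_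
  · exact Eventually.of_forall fun t =>
      (measurable_one.indicator (measurableSet_lt hg measurable_const)).aestronglyMeasurable
  · refine Eventually.of_forall fun t => ae_of_all _ fun x => ?_
    by_cases hx : g x < t <;> simp [hx]
  · have : ∀ᵐ x ∂μ, g x ≠ t₀ := measure_eq_zero_iff_ae_notMem.1 (h t₀)
    filter_upwards [this] with x hx
    rcases hx.lt_or_gt with hlt | hgt
    · exact (continuousAt_const (y := (1 : ℝ))).congr (by
        filter_upwards [lt_mem_nhds hlt] with t ht
        simp [ht])
    · exact (continuousAt_const (y := (0 : ℝ))).congr (by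
        filter_upwards [gt_mem_nhds hgt] with t ht
        simp [ht.not_gt])

instance : IsProbabilityMeasure (volume.restrict (Icc (0 : ℝ) 1)) := ⟨by simp⟩

lemma integral_id_Icc_zero_one : ∫ x in Icc (0 : ℝ) 1, x = 1 / 2 := by
  rw [integral_Icc_eq_integral_Ioc, ← intervalIntegral.integral_of_le zero_le_one]
  norm_num [integral_id]

lemma memLp_id_Icc_zero_one : MemLp id 2 (volume.restrict (Icc (0 : ℝ) 1)) :=
  memLp_of_bounded (ae_restrict_mem measurableSet_Icc) aestronglyMeasurable_id 2

lemma variance_id_Icc_zero_one_le : Var[id; volume.restrict (Icc (0 : ℝ) 1)] ≤ 1 / 4 := by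
  have := variance_le_sq_of_bounded (μ := volume.restrict (Icc (0 : ℝ) 1))
    (ae_restrict_mem measurableSet_Icc) aemeasurable_id
  norm_num at this
  exact this

noncomputable abbrev uniformCube (ι : Type*) [Fintype ι] : Measure (ι → ℝ) :=
  Measure.pi fun _ => volume.restrict (Icc (0 : ℝ) 1)

section uniformCube

variable {ι : Type*} [Fintype ι]

lemma volume_setOf_sum_eq [Nonempty ι] (t : ℝ) :
    volume {x : ι → ℝ | ∑ i, x i = t} = 0 := by
  let L : (ι → ℝ) →ᵃ[ℝ] ℝ := (∑ i, LinearMap.proj i : (ι → ℝ) →ₗ[ℝ] ℝ).toAffineMap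
  have hL : ∀ x, L x = ∑ i, x i := fun x => by simp [L]
  have hset : {x : ι → ℝ | ∑ i, x i = t} =
      (AffineSubspace.comap L (affineSpan ℝ {t}) : Set _) := by
    ext x; simp [hL]
  rw [hset]
  refine Measure.addHaar_affineSubspace _ _ fun htop => ?_
  classical
  obtain ⟨i⟩ := ‹Nonempty ι›
  have : Pi.single i (t + 1) ∈ (AffineSubspace.comap L (affineSpan ℝ {t}) : Set (ι → ℝ)) := by
    rw [htop]; trivial
  simp [hL] at this

lemma uniformCube_eq_restrict :
    uniformCube ι = volume.restrict (univ.pi fun _ => Icc (0 : ℝ) 1) := by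
  rw [volume_pi, Measure.restrict_pi_pi]

lemma integral_sum_uniformCube : ∫ x, ∑ i, x i ∂uniformCube ι = Fintype.card ι / 2 := by
  rw [integral_finsetSum (f := fun i (x : ι → ℝ) => x i) _ fun i _ =>
    integrable_eval (memLp_id_Icc_zero_one.integrable one_le_two)]
  simp [integral_eval, integral_id_Icc_zero_one]
  ring

lemma variance_sum_uniformCube_le :
    Var[fun x => ∑ i, x i; uniformCube ι] ≤ Fintype.card ι / 4 := by
  have := variance_sum_pi (μ := fun _ : ι => volume.restrict (Icc (0 : ℝ) 1)) (X := fun _ => id)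
    fun _ => memLp_id_Icc_zero_one
  simp only [id, Finset.sum_fn] at this
  rw [this, Finset.sum_const, Finset.card_univ, nsmul_eq_mul, div_eq_mul_one_div]
  exact mul_le_mul_of_nonneg_left variance_id_Icc_zero_one_le (Nat.cast_nonneg _)

lemma uniformCube_real_sum_lt_le {d : ℝ} (hd : 0 < d) :
    (uniformCube ι).real {x | ∑ i, x i < Fintype.card ι / 2 - d} ≤
      Fintype.card ι / (4 * d ^ 2) := by
  have hS : MemLp (fun x : ι → ℝ => ∑ i, x i) 2 (uniformCube ι) :=
    memLp_finsetSum (f := fun i (x : ι → ℝ) => x i) _ fun i _ =>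
      memLp_id_Icc_zero_one.comp_measurePreserving (measurePreserving_eval _ i)
  calc (uniformCube ι).real {x | ∑ i, x i < Fintype.card ι / 2 - d}
      ≤ (uniformCube ι).real {x | d ≤ |∑ i, x i - ∫ y, ∑ i, y i ∂uniformCube ι|} := by
        refine measureReal_mono (fun x hx => ?_)
        rw [mem_ofPred_eq, integral_sum_uniformCube, abs_sub_comm]
        exact le_abs.2 (Or.inl (by linarith [hx.out]))
    _ ≤ Var[fun x => ∑ i, x i; uniformCube ι] / d ^ 2 :=
        ENNReal.toReal_le_of_le_ofReal (div_nonneg (variance_nonneg _ _) (sq_nonneg d))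
          (meas_ge_le_variance_div_sq hS hd)
    _ ≤ Fintype.card ι / 4 / d ^ 2 := by gcongr; exact variance_sum_uniformCube_le
    _ = Fintype.card ι / (4 * d ^ 2) := by ring

end uniformCube

lemma Vol_eq_measureReal (n : ℕ) (τ : ℝ) :
    Vol n τ = (uniformCube (Fin n)).real {x | ∑ i, x i < τ} := by
  rw [uniformCube_eq_restrict, measureReal_restrict_apply
    (measurableSet_lt (by fun_prop) measurable_const), Vol, measureReal_def]
  congr 2
  ext x
  simp [Pi.le_def, forall_and, and_comm]

lemma Vol_mono (n : ℕ) : Monotone (Vol n) := fun _ _ h => by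
  simp_rw [Vol_eq_measureReal]
  exact measureReal_mono fun x hx => lt_of_lt_of_le hx h

lemma continuous_Vol {n : ℕ} (hn : 0 < n) : Continuous (Vol n) := by
  have : Nonempty (Fin n) := ⟨⟨0, hn⟩⟩
  simp_rw [funext (Vol_eq_measureReal n)]
  refine continuous_measureReal_setOf_lt (by fun_prop) fun t => ?_
  rw [uniformCube_eq_restrict]
  exact nonpos_iff_eq_zero.1 ((Measure.restrict_apply_le _ _).trans_eq (volume_setOf_sum_eq t))

lemma Vol_eq_one {n : ℕ} {τ : ℝ} (h : (n : ℝ) < τ) : Vol n τ = 1 := by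
  have hcube : (univ.pi fun _ => Icc (0 : ℝ) 1) ⊆ {x : Fin n → ℝ | ∑ i, x i < τ} := fun x hx =>
    calc ∑ i, x i ≤ ∑ _i : Fin n, (1 : ℝ) := Finset.sum_le_sum fun i _ => (hx i trivial).2
      _ < τ := by simpa using h
  rw [Vol_eq_measureReal, uniformCube_eq_restrict, measureReal_restrict_apply
    (measurableSet_lt (by fun_prop) measurable_const), inter_eq_right.2 hcube]
  simp [measureReal_def, Real.volume_Icc_pi]

lemma Vol_one_pos (n : ℕ) : 0 < Vol n 1 := by
  set U : Set (Fin n → ℝ) := univ.pi (fun _ => Ioo 0 1) ∩ {x | ∑ i, x i < 1}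
  have hU : IsOpen U :=
    (isOpen_set_pi finite_univ fun _ _ => isOpen_Ioo).inter
      (isOpen_lt (by fun_prop) continuous_const)
  have hpt : (fun _ => 1 / ((n : ℝ) + 2)) ∈ U := by
    refine ⟨fun i _ => ⟨by positivity, by rw [div_lt_one (by positivity)]; linarith⟩, ?_⟩
    simp only [mem_ofPred_eq, Finset.sum_const, Finset.card_univ, Fintype.card_fin, nsmul_eq_mul]
    rw [← mul_div_assoc, mul_one, div_lt_one (by positivity)]
    linarith
  have hsub : U ⊆ {x | ∑ i, x i < 1} ∩ univ.pi fun _ => Icc 0 1 :=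
    fun x hx => ⟨hx.2, fun i _ => Ioo_subset_Icc_self (hx.1 i trivial)⟩
  rw [Vol_eq_measureReal]
  refine ENNReal.toReal_pos ?_ (measure_ne_top _ _)
  rw [uniformCube_eq_restrict,
    Measure.restrict_apply (measurableSet_lt (by fun_prop) measurable_const)]
  exact ((hU.measure_pos volume ⟨_, hpt⟩).trans_le (measure_mono hsub)).ne'

lemma tendsto_Vol_mul_add_nhds_zero {a : ℝ} (ha : a < 1 / 2) (b : ℝ) :
    Tendsto (fun n : ℕ => Vol n (a * n + b)) atTop (𝓝 0) := by
  obtain ⟨c, hc, rfl⟩ : ∃ c, 0 < c ∧ a = 1 / 2 - c := ⟨1 / 2 - a, by linarith, by ring⟩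
  refine squeeze_zero' (Eventually.of_forall fun n => ENNReal.toReal_nonneg) ?_
    (tendsto_const_div_atTop_nhds_zero_nat (1 / c ^ 2))
  obtain ⟨N, hN⟩ := exists_nat_gt (2 * b / c)
  filter_upwards [eventually_ge_atTop (max N 1)] with n hn
  have hn1 : (1 : ℝ) ≤ n := by exact_mod_cast (le_max_right _ _).trans hn
  have hbn : 2 * b ≤ c * n := by
    have : (N : ℝ) ≤ n := by exact_mod_cast (le_max_left _ _).trans hn
    rw [div_lt_iff₀ hc] at hN
    nlinarith
  calc Vol n ((1 / 2 - c) * n + b) ≤ Vol n (n / 2 - c * n / 2) := Vol_mono n (by linarith)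
    _ ≤ n / (4 * (c * n / 2) ^ 2) := by
        simpa [Vol_eq_measureReal] using uniformCube_real_sum_lt_le (ι := Fin n) (d := c * n / 2)
          (by positivity)
    _ = 1 / c ^ 2 / n := by field_simp; ring

lemma exists_ge_Vol_eq {n : ℕ} (hn : 0 < n) {T c : ℝ} (hT : Vol n T ≤ c) (hc : c ≤ 1) :
    ∃ τ, T ≤ τ ∧ Vol n τ = c := by
  have hmax : Vol n (max T (n + 1)) = 1 := Vol_eq_one (by linarith [le_max_right T (n + 1 : ℝ)])
  obtain ⟨τ, hτ, h⟩ := intermediate_value_Icc (le_max_left T (n + 1))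
    (continuous_Vol hn).continuousOn ⟨hT, by rwa [hmax]⟩
  exact ⟨τ, hτ.1, h⟩

/-- Lemma 10.4: for every integer `q ≥ 2` and `ε' > 0` there is `n₀ ≥ 2` such
that for all `n ≥ n₀` there exist `τ, σ > 0` with
`q·Vol_n(τ) < 1 < q·Vol_n(τ) + Vol_n(σ)` and `(2 + ε')·(τ − σ) > n`. -/
theorem exists_parameters (q : ℕ) (hq : 2 ≤ q) (ε' : ℝ) (hε' : 0 < ε') :
    ∃ n₀ : ℕ, 2 ≤ n₀ ∧ ∀ n : ℕ, n₀ ≤ n →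
      ∃ τ σ : ℝ, 0 < τ ∧ 0 < σ ∧
        (q : ℝ) * Vol n τ < 1 ∧
        1 < (q : ℝ) * Vol n τ + Vol n σ ∧
        (n : ℝ) < (2 + ε') * (τ - σ) := by
  have hq1 : (1 : ℝ) ≤ q := by exact_mod_cast one_le_two.trans hq
  have hsmall : ∀ᶠ n : ℕ in atTop, Vol n (1 / (2 + ε') * n + 2) < 1 / (2 * q) :=
    (tendsto_Vol_mul_add_nhds_zero (by gcongr; linarith) 2).eventually (gt_mem_nhds (by positivity))
  obtain ⟨N, hN⟩ := eventually_atTop.1 hsmall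
  refine ⟨max N 2, le_max_right _ _, fun n hn => ?_⟩
  have hv : 0 < Vol n 1 := Vol_one_pos n
  have hv1 : Vol n 1 ≤ 1 := Vol_eq_measureReal n 1 ▸ measureReal_le_one
  obtain ⟨τ, hTτ, hτ⟩ := exists_ge_Vol_eq (by omega) (c := (1 - Vol n 1 / 2) / q)
    ((hN n (le_of_max_le_left hn)).le.trans
      (by rw [div_le_div_iff₀ (by positivity) (by positivity)]; nlinarith))
    (by rw [div_le_one (by positivity)]; linarith)
  have hqτ : (q : ℝ) * Vol n τ = 1 - Vol n 1 / 2 := by rw [hτ, mul_div_cancel₀ _ (by positivity)]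
  have hTpos : 0 < 1 / (2 + ε') * n + 2 := by positivity
  refine ⟨τ, 1, hTpos.trans_le hTτ, one_pos, by linarith, by linarith, ?_⟩
  have : (n : ℝ) = (2 + ε') * (1 / (2 + ε') * n) := by field_simp
  nlinarith
end

section
/- Let n ≥ 1 be an integer, let d₁, …, dₙ be positive integers, let τ ∈ ℝ, and let J_d(τ) be the number of n-tuples (k₁,…,kₙ) of integers with 0 ≤ k_i ≤ d_i for all i and k₁/d₁ + ⋯ + kₙ/dₙ < τ. Then Vol_n(τ) ≤ J_d(τ)/(d₁⋯dₙ) ≤ Vol_n(τ + Σ_{i=1}^n 1/d_i) + ( ∏_{i=1}^n (1 + 1/d_i) − 1 ). (The lattice-point count versus volume estimate proved in Section 9.) -/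
/-!
Cover `[0,1]ⁿ` by the half-open grid cells `∏ [kᵢ/dᵢ, (kᵢ+1)/dᵢ)`, each of volume `1/(d₁⋯dₙ)`.
A point `x` lies in the cell of `kᵢ = ⌊dᵢ xᵢ⌋`, and this `k` is counted by `J_d(τ)` whenever
`∑ xᵢ < τ`; this gives the lower bound. Conversely, the cell of a counted `k` with all `kᵢ < dᵢ`
lies inside `[0,1]ⁿ ∩ {∑ xᵢ < τ + ∑ 1/dᵢ}`, and the remaining counted `k` have some `kᵢ = dᵢ`,
so there are at most `∏ (dᵢ + 1) − ∏ dᵢ` of them.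
-/

open MeasureTheory Set Finset

lemma Finset.card_add_card_le_card_inter_add_card {α : Type*} [DecidableEq α]
    {s t u : Finset α} (hs : s ⊆ t) (hu : u ⊆ t) : #s + #u ≤ #(s ∩ u) + #t := by
  rw [← card_inter_add_card_sdiff s u, ← card_sdiff_add_card_eq_card hu, add_assoc]
  gcongr

lemma prod_add_one_sub_prod_div_prod {ι K : Type*} [Fintype ι] [Field K] {a : ι → K}
    (ha : ∀ i, a i ≠ 0) :
    (∏ i, (a i + 1) - ∏ i, a i) / ∏ i, a i = ∏ i, (1 + 1 / a i) - 1 := by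
  rw [sub_div, div_self (prod_ne_zero_iff.2 fun i _ => ha i), ← prod_div_distrib]
  congr 2 with i
  rw [add_div, div_self (ha i), add_comm]

variable {ι : Type*} {d : ι → ℕ}

def gridCell (d k : ι → ℕ) : Set (ι → ℝ) :=
  Set.pi univ fun i => Ico ((k i : ℝ) / d i) ((k i + 1) / d i)

lemma mem_gridCell_iff (hd : ∀ i, 0 < d i) {k : ι → ℕ} {x : ι → ℝ} :
    x ∈ gridCell d k ↔ ∀ i, 0 ≤ x i ∧ ⌊(d i : ℝ) * x i⌋₊ = k i := by
  refine forall_congr' fun i => ?_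
  have hdi : (0 : ℝ) < d i := Nat.cast_pos.2 (hd i)
  simp only [Set.mem_univ, true_implies, Set.mem_Ico]
  rw [div_le_iff₀' hdi, lt_div_iff₀' hdi]
  constructor
  · rintro ⟨hlo, hhi⟩
    have hx : 0 ≤ (d i : ℝ) * x i := (Nat.cast_nonneg _).trans hlo
    exact ⟨nonneg_of_mul_nonneg_right hx hdi, (Nat.floor_eq_iff hx).2 ⟨hlo, hhi⟩⟩
  · rintro ⟨hx, hk⟩
    exact hk ▸ (Nat.floor_eq_iff (by positivity)).1 rfl

lemma pairwiseDisjoint_gridCell (hd : ∀ i, 0 < d i) (K : Set (ι → ℕ)) :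
    K.PairwiseDisjoint (gridCell d) := by
  intro k _ l _ hkl
  refine Set.disjoint_left.2 fun x hk hl => hkl (funext fun i => ?_)
  rw [← ((mem_gridCell_iff hd).1 hk i).2, ((mem_gridCell_iff hd).1 hl i).2]

def cubeSublevel (ι : Type*) [Fintype ι] (τ : ℝ) : Set (ι → ℝ) :=
  {x | (∀ i, x i ∈ Icc (0 : ℝ) 1) ∧ ∑ i, x i < τ}

variable [Fintype ι]

lemma volume_gridCell (hd : ∀ i, 0 < d i) (k : ι → ℕ) :
    volume (gridCell d k) = ENNReal.ofReal (∏ i, (d i : ℝ))⁻¹ := by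
  rw [gridCell, volume_pi_pi, ← prod_inv_distrib,
    ENNReal.ofReal_prod_of_nonneg fun i _ => by positivity]
  refine prod_congr rfl fun i _ => ?_
  rw [Real.volume_Ico]
  congr 1
  have hdi : (d i : ℝ) ≠ 0 := Nat.cast_ne_zero.2 (hd i).ne'
  field_simp
  ring

lemma toReal_volume_le_of_subset_biUnion_gridCell (hd : ∀ i, 0 < d i) {s : Set (ι → ℝ)}
    {K : Finset (ι → ℕ)} (hs : s ⊆ ⋃ k ∈ K, gridCell d k) :
    (volume s).toReal ≤ #K / ∏ i, (d i : ℝ) := by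
  have hle : volume s ≤ #K * ENNReal.ofReal (∏ i, (d i : ℝ))⁻¹ :=
    calc volume s ≤ volume (⋃ k ∈ K, gridCell d k) := measure_mono hs
      _ ≤ ∑ k ∈ K, volume (gridCell d k) := measure_biUnion_finset_le K _
      _ = #K * ENNReal.ofReal (∏ i, (d i : ℝ))⁻¹ := by simp [volume_gridCell hd]
  refine (ENNReal.toReal_mono (by finiteness) hle).trans_eq ?_
  rw [ENNReal.toReal_mul, ENNReal.toReal_natCast, ENNReal.toReal_ofReal (by positivity),
    div_eq_mul_inv]

lemma le_toReal_volume_of_biUnion_gridCell_subset (hd : ∀ i, 0 < d i) {s : Set (ι → ℝ)}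
    (hs : volume s ≠ ⊤) {K : Finset (ι → ℕ)} (hK : ∀ k ∈ K, gridCell d k ⊆ s) :
    #K / ∏ i, (d i : ℝ) ≤ (volume s).toReal := by
  have hle : #K * ENNReal.ofReal (∏ i, (d i : ℝ))⁻¹ ≤ volume s :=
    calc #K * ENNReal.ofReal (∏ i, (d i : ℝ))⁻¹ = ∑ k ∈ K, volume (gridCell d k) := by
          simp [volume_gridCell hd]
      _ = volume (⋃ k ∈ K, gridCell d k) :=
          (measure_biUnion_finset (pairwiseDisjoint_gridCell hd _)
            fun _ _ => MeasurableSet.univ_pi fun _ => measurableSet_Ico).symm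
      _ ≤ volume s := measure_mono (iUnion₂_subset hK)
  refine le_of_eq_of_le ?_ (ENNReal.toReal_mono hs hle)
  rw [ENNReal.toReal_mul, ENNReal.toReal_natCast, ENNReal.toReal_ofReal (by positivity),
    div_eq_mul_inv]

lemma volume_cubeSublevel_ne_top (τ : ℝ) : volume (cubeSublevel ι τ) ≠ ⊤ :=
  ((Metric.isBounded_Icc (0 : ι → ℝ) 1).subset fun _ hx =>
    ⟨fun i => (hx.1 i).1, fun i => (hx.1 i).2⟩).measure_lt_top.ne

section latticePoints

variable [DecidableEq ι]

noncomputable def latticePoints (d : ι → ℕ) (τ : ℝ) : Finset (ι → ℕ) :=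
  {k ∈ Fintype.piFinset fun i => Finset.Iic (d i) | ∑ i, (k i : ℝ) / d i < τ}

lemma natCard_eq_card_latticePoints (d : ι → ℕ) (τ : ℝ) :
    Nat.card {k : ι → ℕ // (∀ i, k i ≤ d i) ∧ ∑ i, (k i : ℝ) / d i < τ} =
      #(latticePoints d τ) := by
  rw [← Nat.card_eq_finsetCard]
  exact Nat.card_congr (Equiv.subtypeEquivRight fun k => by simp [latticePoints])

lemma cubeSublevel_subset_biUnion_gridCell (hd : ∀ i, 0 < d i) (τ : ℝ) :
    cubeSublevel ι τ ⊆ ⋃ k ∈ latticePoints d τ, gridCell d k := by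
  rintro x ⟨hx, hsum⟩
  set k : ι → ℕ := fun i => ⌊(d i : ℝ) * x i⌋₊
  have hxk : x ∈ gridCell d k := (mem_gridCell_iff hd).2 fun i => ⟨(hx i).1, rfl⟩
  refine Set.mem_iUnion₂.2 ⟨k, ?_, hxk⟩
  simp only [latticePoints, mem_filter, Fintype.mem_piFinset, Finset.mem_Iic]
  refine ⟨fun i => Nat.floor_le_of_le ?_, hsum.trans_le' (sum_le_sum fun i _ => ?_)⟩
  · exact mul_le_of_le_one_right (Nat.cast_nonneg _) (hx i).2
  · exact (hxk i (Set.mem_univ i)).1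

lemma gridCell_subset_cubeSublevel (hd : ∀ i, 0 < d i) {τ : ℝ} {k : ι → ℕ}
    (hk : k ∈ latticePoints d τ) (hkd : ∀ i, k i < d i) :
    gridCell d k ⊆ cubeSublevel ι (τ + ∑ i, 1 / (d i : ℝ)) := by
  intro x hx
  have hxi := fun i => hx i (Set.mem_univ i)
  have hkτ : ∑ i, (k i : ℝ) / d i < τ := (mem_filter.1 hk).2
  refine ⟨fun i => ⟨(hxi i).1.trans' (by positivity), (hxi i).2.le.trans ?_⟩, ?_⟩
  · rw [div_le_one (Nat.cast_pos.2 (hd i))]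
    exact_mod_cast hkd i
  · calc ∑ i, x i ≤ ∑ i, ((k i : ℝ) + 1) / d i := sum_le_sum fun i _ => (hxi i).2.le
      _ = ∑ i, (k i : ℝ) / d i + ∑ i, 1 / (d i : ℝ) := by
          rw [← sum_add_distrib]
          simp only [add_div]
      _ < τ + ∑ i, 1 / (d i : ℝ) := by gcongr

lemma card_latticePoints_le (τ : ℝ) :
    (#(latticePoints d τ) : ℝ) ≤ #(latticePoints d τ ∩ Fintype.piFinset fun i => Finset.Iio (d i)) +
      (∏ i, ((d i : ℝ) + 1) - ∏ i, (d i : ℝ)) := by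
  have h := card_add_card_le_card_inter_add_card (s := latticePoints d τ) (filter_subset _ _)
    (Fintype.piFinset_subset _ _ fun i => Finset.Iio_subset_Iic_self)
  simp only [Fintype.card_piFinset, Nat.card_Iio, Nat.card_Iic] at h
  have h' := (Nat.cast_le (α := ℝ)).2 h
  push_cast at h'
  linarith

lemma card_inter_div_prod_le_toReal_volume (hd : ∀ i, 0 < d i) (τ : ℝ) :
    #(latticePoints d τ ∩ Fintype.piFinset fun i => Finset.Iio (d i)) / ∏ i, (d i : ℝ) ≤
      (volume (cubeSublevel ι (τ + ∑ i, 1 / (d i : ℝ)))).toReal := by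
  refine le_toReal_volume_of_biUnion_gridCell_subset hd (volume_cubeSublevel_ne_top _)
    fun k hk => ?_
  rw [Finset.mem_inter, Fintype.mem_piFinset] at hk
  exact gridCell_subset_cubeSublevel hd hk.1 fun i => Finset.mem_Iio.1 (hk.2 i)

end latticePoints

theorem lattice_count_vs_volume_general (n : ℕ)
    (d : Fin n → ℕ) (hd : ∀ i, 0 < d i) (τ : ℝ) :
    Vol n τ ≤
      (Nat.card {k : Fin n → ℕ //
          (∀ i, k i ≤ d i) ∧ ∑ i, (k i : ℝ) / (d i : ℝ) < τ} : ℝ) /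
        ∏ i, (d i : ℝ) ∧
    (Nat.card {k : Fin n → ℕ //
        (∀ i, k i ≤ d i) ∧ ∑ i, (k i : ℝ) / (d i : ℝ) < τ} : ℝ) /
        ∏ i, (d i : ℝ) ≤
      Vol n (τ + ∑ i, 1 / (d i : ℝ)) + ((∏ i, (1 + 1 / (d i : ℝ))) - 1) := by
  rw [natCard_eq_card_latticePoints]
  refine ⟨toReal_volume_le_of_subset_biUnion_gridCell hd
    (cubeSublevel_subset_biUnion_gridCell hd τ), ?_⟩
  calc (#(latticePoints d τ) : ℝ) / ∏ i, (d i : ℝ)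
      ≤ (#(latticePoints d τ ∩ Fintype.piFinset fun i => Finset.Iio (d i)) +
          (∏ i, ((d i : ℝ) + 1) - ∏ i, (d i : ℝ))) / ∏ i, (d i : ℝ) := by
        gcongr
        exact card_latticePoints_le τ
    _ = #(latticePoints d τ ∩ Fintype.piFinset fun i => Finset.Iio (d i)) / ∏ i, (d i : ℝ) +
          (∏ i, (1 + 1 / (d i : ℝ)) - 1) := by
        rw [add_div, prod_add_one_sub_prod_div_prod fun i => Nat.cast_ne_zero.2 (hd i).ne']
    _ ≤ Vol n (τ + ∑ i, 1 / (d i : ℝ)) + (∏ i, (1 + 1 / (d i : ℝ)) - 1) := by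
        gcongr
        exact card_inter_div_prod_le_toReal_volume hd τ

/-- The lattice-point count versus volume estimate of Section 9: if
`J_d(τ)` is the number of tuples `(k₁, …, kₙ)` of integers with
`0 ≤ k_i ≤ d_i` and `Σ k_i/d_i < τ`, then
`Vol_n(τ) ≤ J_d(τ)/(d₁⋯dₙ) ≤ Vol_n(τ + Σ 1/d_i) + (∏ (1 + 1/d_i) − 1)`. -/
theorem lattice_count_vs_volume (n : ℕ) (hn : 1 ≤ n)
    (d : Fin n → ℕ) (hd : ∀ i, 0 < d i) (τ : ℝ) :
    Vol n τ ≤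
      (Nat.card {k : Fin n → ℕ //
          (∀ i, k i ≤ d i) ∧ ∑ i, (k i : ℝ) / (d i : ℝ) < τ} : ℝ) /
        ∏ i, (d i : ℝ) ∧
    (Nat.card {k : Fin n → ℕ //
        (∀ i, k i ≤ d i) ∧ ∑ i, (k i : ℝ) / (d i : ℝ) < τ} : ℝ) /
        ∏ i, (d i : ℝ) ≤
      Vol n (τ + ∑ i, 1 / (d i : ℝ)) + ((∏ i, (1 + 1 / (d i : ℝ))) - 1) :=
  lattice_count_vs_volume_general n d hd τ
end

section
/- Let n ≥ 1 and let A₁, …, Aₙ be n×n complex Hermitian matrices. Let c ∈ ℂ be the coefficient of the monomial t₁t₂⋯tₙ in the polynomial det(t₁A₁ + ⋯ + tₙAₙ) ∈ ℂ[t₁,…,tₙ] (i.e., n! times the mixed discriminant of A₁,…,Aₙ). If every A_k is positive semidefinite, then c is a nonnegative real number; if every A_k is positive definite, then c is a positive real number. (The pointwise linear-algebra content of Proposition 1.5: a wedge product of positive (resp. semipositive) (1,1)-forms is positive (resp. semipositive), expressed at a point in local coordinates.) -/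
/-!
Write `D(A₁, …, Aₙ) = ∑_σ det (rows: row i of A_{σ i})`; expanding `det (∑ tₖ Aₖ)` row by row shows
that the coefficient of `t₁⋯tₙ` is `D(A)`. `D` is multilinear, and on rank-one matrices
`D(u₁u₁*, …, uₙuₙ*) = |det U|²`. Writing each positive semidefinite `Aₖ` as a sum of such rank-one
matrices gives `D(A) ≥ 0`, hence `D` is monotone on positive semidefinite families. A positive
definite `Aₖ` dominates `rₖ • 1` with `rₖ > 0`, so `D(A) ≥ (∏ rₖ) n! > 0`.
-/

open scoped ComplexOrder MatrixOrder Nat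
open Matrix MvPolynomial

theorem Finsupp.sum_single_one_comp_eq_iff_bijective {ι : Type*} [Fintype ι] {f : ι → ι} :
    ∑ i, single (f i) 1 = ∑ k, single k (1 : ℕ) ↔ f.Bijective := by
  refine ⟨fun h => ?_, fun h => Fintype.sum_bijective f h _ _ fun _ => rfl⟩
  refine (Fintype.bijective_iff_surjective_and_card f).2 ⟨fun k => ?_, rfl⟩
  by_contra! hk
  simpa [single_apply, hk] using DFunLike.congr_fun h k

theorem MvPolynomial.coeff_sum_single_one_prod_X {ι R : Type*} [Fintype ι] [DecidableEq ι]
    [CommSemiring R] (f : ι → ι) :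
    coeff (∑ k, Finsupp.single k 1) (∏ i, X (f i) : MvPolynomial ι R) =
      if f.Bijective then 1 else 0 := by
  simp only [X, ← monomial_sum_one, coeff_monomial, Finsupp.sum_single_one_comp_eq_iff_bijective]

namespace Matrix

section CommRing

variable {ι R : Type*} [Fintype ι] [DecidableEq ι] [CommRing R]

/-- `n!` times the classical mixed discriminant. -/
noncomputable def mixedDiscriminant : MultilinearMap R (fun _ : ι => Matrix ι ι R) R :=
  ∑ σ : Equiv.Perm ι,
    (detRowAlternating.toMultilinearMap.compLinearMap
      fun i => (LinearMap.proj i : Matrix ι ι R →ₗ[R] ι → R)).domDomCongr σ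

theorem mixedDiscriminant_apply (A : ι → Matrix ι ι R) :
    mixedDiscriminant A = ∑ σ : Equiv.Perm ι, det (of fun i => A (σ i) i) := by
  simp only [mixedDiscriminant, _root_.sum_apply]
  rfl

theorem det_sum_X_mul_C (A : ι → Matrix ι ι R) :
    det (of fun i j => ∑ k, X k * C (A k i j)) =
      ∑ f : ι → ι, C (det (of fun i => A (f i) i)) * ∏ i, X (f i) := by
  have hrows : (of fun i j => ∑ k, X k * C (A k i j) : Matrix ι ι (MvPolynomial ι R)) =
      fun i => ∑ k, (X k : MvPolynomial ι R) • fun j => C (A k i j) := by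
    ext i j
    simp [Finset.sum_apply]
  rw [hrows]
  refine (detRowAlternating.toMultilinearMap.map_sum _).trans (Finset.sum_congr rfl fun f _ => ?_)
  rw [MultilinearMap.map_smul_univ, smul_eq_mul, mul_comm, RingHom.map_det]
  rfl

theorem coeff_det_sum_X_mul_C (A : ι → Matrix ι ι R) :
    coeff (∑ k, Finsupp.single k 1) (det (of fun i j => ∑ k, X k * C (A k i j))) =
      mixedDiscriminant A := by
  simp only [det_sum_X_mul_C, coeff_sum, coeff_C_mul, coeff_sum_single_one_prod_X, mul_ite,
    mul_one, mul_zero, ← Finset.sum_filter, mixedDiscriminant_apply]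
  rw [Finset.sum_subtype (p := Function.Bijective) _ (fun f => by simp),
    ← Equiv.bijectiveEquiv.symm.sum_comp]
  rfl

theorem mixedDiscriminant_vecMulVec (u w : ι → ι → R) :
    mixedDiscriminant (fun k => vecMulVec (u k) (w k)) = det (of u) * det (of w) := by
  have hrow (σ : Equiv.Perm ι) : det (of fun i => vecMulVec (u (σ i)) (w (σ i)) i) =
      (∏ i, u (σ i) i) * (Equiv.Perm.sign σ * det (of w)) := by
    rw [← det_permute σ (of w), ← det_mul_column]
    rfl
  simp only [mixedDiscriminant_apply, hrow, ← mul_assoc, ← Finset.sum_mul]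
  rw [det_apply' (of u)]
  simp only [mul_comm, of_apply]

theorem mixedDiscriminant_one :
    mixedDiscriminant (fun _ => (1 : Matrix ι ι R)) = (Fintype.card ι)! := by
  rw [mixedDiscriminant_apply]
  change ∑ _σ : Equiv.Perm ι, det (1 : Matrix ι ι R) = _
  simp [Fintype.card_perm]

end CommRing

section RCLike

variable {ι 𝕜 : Type*} [Fintype ι] [DecidableEq ι] [RCLike 𝕜]

theorem mixedDiscriminant_nonneg {A : ι → Matrix ι ι 𝕜} (hA : 0 ≤ A) :
    0 ≤ mixedDiscriminant A := by
  choose m v hv using fun k => posSemidef_iff_eq_sum_vecMulVec.1 (hA k).posSemidef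
  rw [funext hv, MultilinearMap.map_sum]
  refine Finset.sum_nonneg fun r _ => ?_
  rw [mixedDiscriminant_vecMulVec,
    show (of fun k => star (v k (r k))) = (of fun k => v k (r k))ᴴᵀ from rfl, det_transpose,
    det_conjTranspose]
  exact mul_star_self_nonneg _

theorem mixedDiscriminant_mono {A B : ι → Matrix ι ι 𝕜} (hB : 0 ≤ B) (hBA : B ≤ A) :
    mixedDiscriminant B ≤ mixedDiscriminant A := by
  have hAB : 0 ≤ A - B := sub_nonneg.2 hBA
  calc mixedDiscriminant B = mixedDiscriminant ((Finset.univ : Finset ι).piecewise B (A - B)) := by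
        rw [Finset.piecewise_univ]
    _ ≤ ∑ s : Finset ι, mixedDiscriminant (s.piecewise B (A - B)) :=
        Finset.single_le_sum (fun s _ => mixedDiscriminant_nonneg
          (Finset.le_piecewise_of_le_of_le s hB hAB)) (Finset.mem_univ _)
    _ = mixedDiscriminant A := by rw [← MultilinearMap.map_add_univ, add_sub_cancel]

theorem PosDef.exists_pos_algebraMap_le {A : Matrix ι ι 𝕜} (hA : A.PosDef) :
    ∃ r > 0, algebraMap ℝ _ r ≤ A := by
  cases subsingleton_or_nontrivial (Matrix ι ι 𝕜)
  · exact ⟨1, one_pos, (Subsingleton.elim _ A).le⟩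
  · exact (CFC.exists_pos_algebraMap_le_iff hA.isHermitian).2
      fun x hx => hA.isStrictlyPositive.spectrum_pos hx

theorem mixedDiscriminant_pos {A : ι → Matrix ι ι 𝕜} (hA : ∀ k, (A k).PosDef) :
    0 < mixedDiscriminant A := by
  choose r hr hrA using fun k => (hA k).exists_pos_algebraMap_le
  have hsmul (t : ℝ) : algebraMap ℝ (Matrix ι ι 𝕜) t = (t : 𝕜) • 1 := by
    rw [algebraMap_eq_diagonal, smul_one_eq_diagonal]
    rfl
  have hscalar : mixedDiscriminant (fun k => algebraMap ℝ (Matrix ι ι 𝕜) (r k)) =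
      ((∏ k, r k : ℝ) : 𝕜) * (Fintype.card ι)! := by
    simp only [hsmul, MultilinearMap.map_smul_univ, mixedDiscriminant_one, smul_eq_mul,
      RCLike.ofReal_prod]
  calc 0 < mixedDiscriminant (fun k => algebraMap ℝ (Matrix ι ι 𝕜) (r k)) := by
        rw [hscalar]
        exact mul_pos (RCLike.ofReal_pos.2 (Finset.prod_pos fun k _ => hr k))
          (Nat.cast_pos.2 (Nat.factorial_pos _))
    _ ≤ mixedDiscriminant A :=
        mixedDiscriminant_mono (fun k => algebraMap_nonneg _ (hr k).le) hrA

end RCLike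

end Matrix

theorem mixed_discriminant_pos_general (n : ℕ)
    (A : Fin n → Matrix (Fin n) (Fin n) ℂ)
    (c : ℂ)
    (hc : c = MvPolynomial.coeff (∑ k : Fin n, Finsupp.single k 1)
      (Matrix.det (Matrix.of fun i j : Fin n =>
        ∑ k : Fin n, MvPolynomial.X k * MvPolynomial.C (A k i j)))) :
    ((∀ k, (A k).PosSemidef) → c.im = 0 ∧ 0 ≤ c.re) ∧
    ((∀ k, (A k).PosDef) → c.im = 0 ∧ 0 < c.re) := by
  rw [coeff_det_sum_X_mul_C] at hc
  subst hc
  refine ⟨fun hA => ?_, fun hA => ?_⟩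
  · obtain ⟨hre, him⟩ := Complex.nonneg_iff.1 (mixedDiscriminant_nonneg fun k => (hA k).nonneg)
    exact ⟨him.symm, hre⟩
  · obtain ⟨hre, him⟩ := Complex.pos_iff.1 (mixedDiscriminant_pos hA)
    exact ⟨him.symm, hre⟩

/-- The pointwise linear-algebra content of Proposition 1.5: let
`A₁, …, Aₙ` be `n×n` complex Hermitian matrices and let `c` be the coefficient
of the monomial `t₁t₂⋯tₙ` in `det(t₁A₁ + ⋯ + tₙAₙ)` (i.e. `n!` times the mixed
discriminant of `A₁, …, Aₙ`).  If every `A_k` is positive semidefinite then `c`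
is a nonnegative real number; if every `A_k` is positive definite then `c` is a
positive real number. -/
theorem mixed_discriminant_pos (n : ℕ) (hn : 1 ≤ n)
    (A : Fin n → Matrix (Fin n) (Fin n) ℂ) (hA : ∀ k, (A k).IsHermitian)
    (c : ℂ)
    (hc : c = MvPolynomial.coeff (∑ k : Fin n, Finsupp.single k 1)
      (Matrix.det (Matrix.of fun i j : Fin n =>
        ∑ k : Fin n, MvPolynomial.X k * MvPolynomial.C (A k i j)))) :
    ((∀ k, (A k).PosSemidef) → c.im = 0 ∧ 0 ≤ c.re) ∧
    ((∀ k, (A k).PosDef) → c.im = 0 ∧ 0 < c.re) :=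
  mixed_discriminant_pos_general n A c hc
end

section
/- Let K be a number field and let C ∈ ℝ. Then the set {ξ ∈ K : h_K(ξ) ≤ C} is finite. (The number field case of Northcott's finiteness theorem, Theorem 3.15, applied to the naive height of Proposition 3.16.) -/
open NumberField IsDedekindDomain

/-- The norm at a non-archimedean place of a number field `K`, given by a prime
`𝔭` of the ring of integers: `‖x‖_𝔭 = (𝓞 K : 𝔭)^(-ord_𝔭 x)` for `x ≠ 0`, and
`‖0‖_𝔭 = 0`. -/
noncomputable def finPlaceNorm (K : Type*) [Field K] [NumberField K]
    (𝔭 : HeightOneSpectrum (𝓞 K)) (x : K) : ℝ :=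
  if hx : 𝔭.valuation K x = 0 then 0
  else (Ideal.absNorm 𝔭.asIdeal : ℝ) ^ (Multiplicative.toAdd (WithZero.unzero hx))

/-- The logarithmic height `h_K(ξ) = Σ_v log max {1, ‖ξ‖_v}`, the sum over all
places of `K` (archimedean places correspond to field embeddings `K → ℂ`,
non-archimedean ones to nonzero primes of the ring of integers; all but
finitely many terms vanish). -/
noncomputable def logHeight (K : Type*) [Field K] [NumberField K] (ξ : K) : ℝ :=
  (∑ᶠ σ : K →+* ℂ, Real.log (max 1 ‖σ ξ‖)) +
  ∑ᶠ 𝔭 : HeightOneSpectrum (𝓞 K), Real.log (max 1 (finPlaceNorm K 𝔭 ξ))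


/-!
The height `logHeight K` is Mathlib's `Height.logHeight₁` written place by place: the embeddings
`K →+* ℂ` inducing an infinite place `w` are `w.mult` in number and all give `w`, and
`finPlaceNorm K 𝔭` is the `𝔭`-adic absolute value. Northcott's theorem for `Height.logHeight₁`
(the height bounds a denominator and all conjugates, leaving finitely many candidates) is
`NumberField.finite_setOfPred_logHeight₁_le`.
-/

section

variable {K : Type*} [Field K] [NumberField K]

theorem NumberField.InfinitePlace.sum_embeddings_eq_sum_mult_smul {M : Type*} [AddCommMonoid M]
    (f : ℝ → M) (x : K) :
    ∑ φ : K →+* ℂ, f ‖φ x‖ = ∑ w : InfinitePlace K, w.mult • f (w x) := by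
  classical
  rw [← Finset.sum_fiberwise Finset.univ InfinitePlace.mk]
  refine Finset.sum_congr rfl fun w _ => ?_
  rw [← card_filter_mk_eq w, ← Finset.sum_const]
  refine Finset.sum_congr rfl fun φ hφ => ?_
  rw [← (Finset.mem_filter.mp hφ).2, apply]

theorem finPlaceNorm_eq_finitePlace_mk (𝔭 : HeightOneSpectrum (𝓞 K)) (x : K) :
    finPlaceNorm K 𝔭 x = FinitePlace.mk 𝔭 x := by
  rw [FinitePlace.mk_apply, FinitePlace.norm_embedding', finPlaceNorm]
  split_ifs with hx
  · simp [hx]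
  · simp [WithZeroMulInt.toNNReal_neg_apply _ hx]

theorem logHeight_eq_logHeight₁ (ξ : K) : logHeight K ξ = Height.logHeight₁ ξ := by
  rw [logHeight, logHeight₁_eq, finsum_eq_sum_of_fintype,
    InfinitePlace.sum_embeddings_eq_sum_mult_smul (fun t => Real.log (max 1 t)),
    ← finsum_comp_equiv FinitePlace.equivHeightOneSpectrum.symm]
  simp only [nsmul_eq_mul, finPlaceNorm_eq_finitePlace_mk, FinitePlace.mk_apply,
    FinitePlace.equivHeightOneSpectrum_symm_apply, Real.posLog_eq_log_max_one, apply_nonneg,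
    norm_nonneg]

end

/-- **Northcott's finiteness theorem** for the naive logarithmic height on a
number field: for every `C ∈ ℝ`, the set `{ξ ∈ K : h_K(ξ) ≤ C}` is finite. -/
theorem northcott_numberField (K : Type*) [Field K] [NumberField K] (C : ℝ) :
    {ξ : K | logHeight K ξ ≤ C}.Finite := by
  simpa only [logHeight_eq_logHeight₁] using finite_setOfPred_logHeight₁_le K C
end
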